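/- arXiv:1006.1346 — 2 statements merged into one kernel-verified Lean document; each statement's English description precedes it below -/
import Mathlib

section
/- The block spectral norm is submultiplicative: for matrices W ∈ ℝ^{m×n}, V ∈ ℝ^{n×p}, with partitions ℰ of the rows of W, ℱ of {1,…,n}, and 𝒦 of the columns of V, it holds that ρ_{ℰ,𝒦}(W V) ≤ ρ_{ℰ,ℱ}(W) · ρ_{ℱ,𝒦}(V), where ρ_{𝒜,ℬ}(Z) = max_{B∈ℬ} Σ_{A∈𝒜} ρ(Z_{A,B}). -/
noncomputable def l2 {α : Type*} [Fintype α] (x : α → ℝ) : ℝ := Real.sqrt (∑ i, x i ^ 2)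

noncomputable def spec {α β : Type*} [Fintype α] [Fintype β] (Z : Matrix α β ℝ) : ℝ :=
  sSup {x | ∃ v : β → ℝ, l2 v = 1 ∧ x = l2 (Z.mulVec v)}

/-- Block spectral norm `ρ_{𝒜,ℬ}(Z) = max_{B∈ℬ} Σ_{A∈𝒜} ρ(Z_{A,B})`, with row
partition `pr` and column partition `pc` given as block-assignment maps. -/
noncomputable def rhoc {α β κ₁ κ₂ : Type*} [Fintype α] [Fintype β]
    [Fintype κ₁] [Fintype κ₂] [DecidableEq κ₁] [DecidableEq κ₂]
    (Z : Matrix α β ℝ) (pr : α → κ₁) (pc : β → κ₂) : ℝ :=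
  sSup {x | ∃ F : κ₂, x = ∑ E : κ₁,
    spec (Z.submatrix (Subtype.val : {i // pr i = E} → α) (Subtype.val : {j // pc j = F} → β))}

/-- The linear-equiv version of `Matrix → CLM` between Euclidean spaces. -/
noncomputable def toCLME (α β : Type*) [Fintype α] [Fintype β] [DecidableEq β] :
    Matrix α β ℝ ≃ₗ[ℝ] (EuclideanSpace ℝ β →L[ℝ] EuclideanSpace ℝ α) :=
  Matrix.toEuclideanLin.trans LinearMap.toContinuousLinearMap

noncomputable def toCLM {α β : Type*} [Fintype α] [Fintype β] [DecidableEq β] (Z : Matrix α β ℝ) :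
    EuclideanSpace ℝ β →L[ℝ] EuclideanSpace ℝ α := toCLME α β Z

lemma toCLM_apply {α β : Type*} [Fintype α] [Fintype β] [DecidableEq β] (Z : Matrix α β ℝ)
    (v : EuclideanSpace ℝ β) :
    toCLM Z v = (WithLp.equiv 2 (α → ℝ)).symm (Z.mulVec ((WithLp.equiv 2 (β → ℝ)) v)) := by
  simp [toCLM, toCLME, Matrix.toEuclideanLin_apply]

lemma l2_eq_norm {β : Type*} [Fintype β] (v : β → ℝ) :
    l2 v = ‖(WithLp.equiv 2 (β → ℝ)).symm v‖ := by
  rw [EuclideanSpace.norm_eq]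
  simp [l2, sq_abs]

lemma spec_eq_norm {α β : Type*} [Fintype α] [Fintype β] [DecidableEq β] (Z : Matrix α β ℝ) :
    spec Z = ‖toCLM Z‖ := by
  classical
  rcases isEmpty_or_nonempty β with h | h
  · have h1 : {x | ∃ v : β → ℝ, l2 v = 1 ∧ x = l2 (Z.mulVec v)} = ∅ := by
      ext x
      simp only [Set.mem_setOf_eq, Set.mem_empty_iff_false, iff_false, not_exists]
      rintro v ⟨hv, -⟩
      simp [l2] at hv
    have h2 : toCLM Z = 0 := by
      ext v
      have : v = 0 := Subsingleton.elim v 0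
      simp [this]
    unfold spec; rw [h1, Real.sSup_empty, h2, norm_zero]
  · set f := toCLM Z with hf
    set S := {x | ∃ v : β → ℝ, l2 v = 1 ∧ x = l2 (Z.mulVec v)} with hS
    have hmem : ∀ x, x ∈ S ↔ ∃ w : EuclideanSpace ℝ β, ‖w‖ = 1 ∧ x = ‖f w‖ := by
      intro x
      constructor
      · rintro ⟨v, hv, rfl⟩
        refine ⟨(WithLp.equiv 2 (β → ℝ)).symm v, ?_, ?_⟩
        · rw [← l2_eq_norm]; exact hv
        · rw [toCLM_apply, ← l2_eq_norm]
          simp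
      · rintro ⟨w, hw, rfl⟩
        refine ⟨(WithLp.equiv 2 (β → ℝ)) w, ?_, ?_⟩
        · rw [l2_eq_norm]; simpa using hw
        · rw [l2_eq_norm, toCLM_apply]
    obtain ⟨j⟩ := h
    have hunit : ∃ w : EuclideanSpace ℝ β, ‖w‖ = 1 :=
      ⟨EuclideanSpace.single j (1 : ℝ), by simp⟩
    obtain ⟨w₀, hw₀⟩ := hunit
    have hne : S.Nonempty := ⟨‖f w₀‖, (hmem _).2 ⟨w₀, hw₀, rfl⟩⟩
    have hbdd : ∀ x ∈ S, x ≤ ‖f‖ := by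
      intro x hx
      obtain ⟨w, hw, rfl⟩ := (hmem x).1 hx
      calc ‖f w‖ ≤ ‖f‖ * ‖w‖ := f.le_opNorm w
        _ = ‖f‖ := by rw [hw, mul_one]
    have hbddA : BddAbove S := ⟨‖f‖, hbdd⟩
    refine le_antisymm (csSup_le hne hbdd) ?_
    have hsup0 : 0 ≤ sSup S := by
      refine le_trans (norm_nonneg (f w₀)) (le_csSup hbddA ((hmem _).2 ⟨w₀, hw₀, rfl⟩))
    refine f.opNorm_le_bound hsup0 ?_
    intro v
    rcases eq_or_ne v 0 with rfl | hv
    · simp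
    · have hnv : (0:ℝ) < ‖v‖ := norm_pos_iff.2 hv
      set u : EuclideanSpace ℝ β := ‖v‖⁻¹ • v with hu
      have hu1 : ‖u‖ = 1 := by
        rw [hu, norm_smul, norm_inv, norm_norm, inv_mul_cancel₀ hnv.ne']
      have hmemu : ‖f u‖ ∈ S := (hmem _).2 ⟨u, hu1, rfl⟩
      have h1 : ‖f u‖ ≤ sSup S := le_csSup hbddA hmemu
      have h2 : ‖f v‖ = ‖v‖ * ‖f u‖ := by
        rw [hu, map_smul, norm_smul, norm_inv, norm_norm, ← mul_assoc,
          mul_inv_cancel₀ hnv.ne', one_mul]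
      rw [h2, mul_comm]
      exact mul_le_mul_of_nonneg_right h1 hnv.le

lemma spec_nonneg {α β : Type*} [Fintype α] [Fintype β] (Z : Matrix α β ℝ) : 0 ≤ spec Z := by
  classical
  rw [spec_eq_norm]; exact norm_nonneg _

lemma spec_sum_le {α β ι : Type*} [Fintype α] [Fintype β] [Fintype ι]
    (M : ι → Matrix α β ℝ) : spec (∑ i, M i) ≤ ∑ i, spec (M i) := by
  classical
  simp_rw [spec_eq_norm]
  have : toCLM (∑ i, M i) = ∑ i, toCLM (M i) := by
    simp [toCLM, map_sum]
  rw [this]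
  exact norm_sum_le _ _

lemma spec_mul_le {α β γ : Type*} [Fintype α] [Fintype β] [Fintype γ]
    (X : Matrix α β ℝ) (Y : Matrix β γ ℝ) : spec (X * Y) ≤ spec X * spec Y := by
  classical
  simp_rw [spec_eq_norm]
  have hcomp : toCLM (X * Y) = (toCLM X).comp (toCLM Y) := by
    ext v
    simp [toCLM_apply, Matrix.mulVec_mulVec]
  rw [hcomp]
  exact ContinuousLinearMap.opNorm_comp_le _ _

lemma le_rhoc {α β κ₁ κ₂ : Type*} [Fintype α] [Fintype β]
    [Fintype κ₁] [Fintype κ₂] [DecidableEq κ₁] [DecidableEq κ₂]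
    (Z : Matrix α β ℝ) (pr : α → κ₁) (pc : β → κ₂) (F : κ₂) :
    (∑ E : κ₁, spec (Z.submatrix (Subtype.val : {i // pr i = E} → α)
      (Subtype.val : {j // pc j = F} → β))) ≤ rhoc Z pr pc := by
  have hrange : {x | ∃ F : κ₂, x = ∑ E : κ₁,
      spec (Z.submatrix (Subtype.val : {i // pr i = E} → α)
        (Subtype.val : {j // pc j = F} → β))} =
      Set.range (fun F : κ₂ => ∑ E : κ₁,
        spec (Z.submatrix (Subtype.val : {i // pr i = E} → α)
          (Subtype.val : {j // pc j = F} → β))) := by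
    ext x; simp [eq_comm]
  refine le_csSup ?_ ⟨F, rfl⟩
  rw [hrange]
  exact (Set.finite_range _).bddAbove

lemma rhoc_nonneg {α β κ₁ κ₂ : Type*} [Fintype α] [Fintype β]
    [Fintype κ₁] [Fintype κ₂] [DecidableEq κ₁] [DecidableEq κ₂]
    (Z : Matrix α β ℝ) (pr : α → κ₁) (pc : β → κ₂) : 0 ≤ rhoc Z pr pc := by
  rcases isEmpty_or_nonempty κ₂ with h | h
  · have : {x | ∃ F : κ₂, x = ∑ E : κ₁,
        spec (Z.submatrix (Subtype.val : {i // pr i = E} → α)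
          (Subtype.val : {j // pc j = F} → β))} = ∅ := by
      ext x; simp
    unfold rhoc; rw [this, Real.sSup_empty]
  · obtain ⟨F⟩ := h
    refine le_trans ?_ (le_rhoc Z pr pc F)
    exact Finset.sum_nonneg fun E _ => spec_nonneg _

/-- Submultiplicativity of the block spectral norm:
`ρ_{ℰ,𝒦}(W V) ≤ ρ_{ℰ,ℱ}(W) · ρ_{ℱ,𝒦}(V)`. -/
theorem rhoc_submultiplicative {α β γ A B C : Type*}
    [Fintype α] [Fintype β] [Fintype γ]
    [Fintype A] [Fintype B] [Fintype C] [DecidableEq A] [DecidableEq B] [DecidableEq C]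
    (W : Matrix α β ℝ) (V : Matrix β γ ℝ)
    (pa : α → A) (pb : β → B) (pc : γ → C) :
    rhoc (W * V) pa pc ≤ rhoc W pa pb * rhoc V pb pc := by
  refine Real.sSup_le ?_ (mul_nonneg (rhoc_nonneg _ _ _) (rhoc_nonneg _ _ _))
  rintro x ⟨F0, rfl⟩
  have key : ∀ E : A, (W * V).submatrix (Subtype.val : {i // pa i = E} → α)
      (Subtype.val : {j // pc j = F0} → γ) =
      ∑ F : B, (W.submatrix (Subtype.val : {i // pa i = E} → α)
        (Subtype.val : {k // pb k = F} → β)) *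
        (V.submatrix (Subtype.val : {k // pb k = F} → β)
          (Subtype.val : {j // pc j = F0} → γ)) := by
    intro E
    ext i j
    simp only [Matrix.submatrix_apply, Matrix.mul_apply, Matrix.sum_apply]
    exact (Fintype.sum_fiberwise pb (fun k => W i.val k * V k j.val)).symm
  calc ∑ E : A, spec ((W * V).submatrix (Subtype.val : {i // pa i = E} → α)
        (Subtype.val : {j // pc j = F0} → γ))
      ≤ ∑ E : A, ∑ F : B, spec ((W.submatrix (Subtype.val : {i // pa i = E} → α)
          (Subtype.val : {k // pb k = F} → β)) *
          (V.submatrix (Subtype.val : {k // pb k = F} → β)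
            (Subtype.val : {j // pc j = F0} → γ))) := by
        refine Finset.sum_le_sum fun E _ => ?_
        rw [key E]
        exact spec_sum_le _
    _ ≤ ∑ E : A, ∑ F : B, spec (W.submatrix (Subtype.val : {i // pa i = E} → α)
          (Subtype.val : {k // pb k = F} → β)) *
          spec (V.submatrix (Subtype.val : {k // pb k = F} → β)
            (Subtype.val : {j // pc j = F0} → γ)) := by
        refine Finset.sum_le_sum fun E _ => Finset.sum_le_sum fun F _ => spec_mul_le _ _
    _ = ∑ F : B, (∑ E : A, spec (W.submatrix (Subtype.val : {i // pa i = E} → α)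
          (Subtype.val : {k // pb k = F} → β))) *
          spec (V.submatrix (Subtype.val : {k // pb k = F} → β)
            (Subtype.val : {j // pc j = F0} → γ)) := by
        rw [Finset.sum_comm]
        exact Finset.sum_congr rfl fun F _ => (Finset.sum_mul _ _ _).symm
    _ ≤ ∑ F : B, rhoc W pa pb *
          spec (V.submatrix (Subtype.val : {k // pb k = F} → β)
            (Subtype.val : {j // pc j = F0} → γ)) := by
        refine Finset.sum_le_sum fun F _ =>
          mul_le_mul_of_nonneg_right (le_rhoc W pa pb F) (spec_nonneg _)
    _ = rhoc W pa pb * ∑ F : B, spec (V.submatrix (Subtype.val : {k // pb k = F} → β)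
          (Subtype.val : {j // pc j = F0} → γ)) := (Finset.mul_sum _ _ _).symm
    _ ≤ rhoc W pa pb * rhoc V pb pc :=
        mul_le_mul_of_nonneg_left (le_rhoc V pb pc F0) (rhoc_nonneg W pa pb)
end

section
/- Suppose a block k-sparse vector a with s-sparse blocks satisfies x = D a, and suppose conditions (i) ρ_c(Q D_{Ḡ₀}) < α ≤ 1, (ii) ‖H D_{Ḡ₀}‖_{1,1} < γ with γ ≤ 1 + λ(1−α)/(√g(1−λ)), and (iii) ‖H D_{T₀}‖_{1,1} < 1 hold, where H is the Moore–Penrose pseudo-inverse of D_{S₀} and Q the oblique pseudo-inverse annihilating D_{T₀}. Then for every a' ≠ a with x = D a', one has λ·ψ_𝒢(a) + (1−λ)·‖a‖₁ < λ·ψ_𝒢(a') + (1−λ)·‖a'‖₁; that is, a is the unique minimizer of the noiseless HiLasso program. -/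
noncomputable def l1 {α : Type*} [Fintype α] (x : α → ℝ) : ℝ := ∑ i, |x i|

/-- Maximum column `ℓ¹` norm. -/
noncomputable def norm11 {α β : Type*} [Fintype α] [Fintype β] (W : Matrix α β ℝ) : ℝ :=
  sSup {x | ∃ j : β, x = ∑ i, |W i j|}

/-- Group regularizer `ψ_𝒢(a) = Σ_G ‖a_G‖₂`. -/
noncomputable def psiG {q g : ℕ} (a : Fin q × Fin g → ℝ) : ℝ :=
  ∑ G : Fin q, l2 (fun b => a (G, b))

/-!
Write `a' = a + δ` with `D δ = 0`, and let `δ_S, δ_T, δ_Ḡ` be the parts of `δ` on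
`S₀, T₀, Ḡ₀`. Applying `Q` (which annihilates `D_{T₀}`) and `H` to
`D_S δ_S + D_T δ_T + D_Ḡ δ_Ḡ = 0` gives `δ_S = -Q D_Ḡ δ_Ḡ` and `δ_S = -H (D_T δ_T + D_Ḡ δ_Ḡ)`.
Hence `ψ(δ_S) ≤ ρ_c ψ(δ_Ḡ)` by (i), `‖δ_S‖₁ ≤ θ ‖δ_T‖₁ + γ ‖δ_Ḡ‖₁` with
`θ = ‖H D_{T₀}‖_{1,1} < 1` by (ii)–(iii), and `‖δ_Ḡ‖₁ ≤ √g ψ(δ_Ḡ)`. Since `a` vanishes off `S₀`,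
the objective increases by at least `λ (ψ(δ_Ḡ) - ψ(δ_S)) + (1 - λ) (‖δ_T‖₁ + ‖δ_Ḡ‖₁ - ‖δ_S‖₁)`,
and the bound on `γ` is exactly what makes this positive when `δ ≠ 0`.
-/

open Finset Matrix

section Norms

variable {ι : Type*} [Fintype ι]

lemma sum_subtype_eq_sum_ite {M : Type*} [AddCommMonoid M] (p : ι → Prop) [DecidablePred p]
    (f : ι → M) : ∑ i : {i // p i}, f i = ∑ i, if p i then f i else 0 := by
  rw [← sum_filter]
  exact (sum_subtype _ (by simp) f).symm

lemma l2_eq_norm_s19 (x : ι → ℝ) : l2 x = ‖WithLp.toLp 2 x‖ := by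
  simp [l2, EuclideanSpace.norm_eq]

lemma l2_nonneg (x : ι → ℝ) : 0 ≤ l2 x := Real.sqrt_nonneg _

lemma l2_neg (x : ι → ℝ) : l2 (-x) = l2 x := by
  simp [l2_eq_norm_s19]

lemma l2_smul (c : ℝ) (x : ι → ℝ) : l2 (c • x) = |c| * l2 x := by
  simp [l2_eq_norm_s19, norm_smul]

lemma l2_le_l2_of_abs_le {x y : ι → ℝ} (h : ∀ i, |x i| ≤ |y i|) : l2 x ≤ l2 y :=
  Real.sqrt_le_sqrt <| sum_le_sum fun i _ => sq_le_sq.mpr (h i)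

lemma l2_subtype (p : ι → Prop) [DecidablePred p] (x : ι → ℝ) :
    l2 (fun i : {i // p i} => x i) = l2 (fun i => if p i then x i else 0) := by
  unfold l2
  rw [sum_subtype_eq_sum_ite p fun i => x i ^ 2]
  simp [ite_pow]

lemma l2_ite_fst {κ β : Type*} [Fintype κ] [Fintype β] [DecidableEq κ] (E : κ)
    (x : κ × β → ℝ) :
    l2 (fun y : κ × β => if y.1 = E then x y else 0) = l2 (fun b => x (E, b)) := by
  unfold l2
  rw [Fintype.sum_prod_type, sum_eq_single E (fun F _ hF => by simp [hF]) (by simp)]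
  simp

lemma l2_sub_le (x y : ι → ℝ) : l2 (x - y) ≤ l2 x + l2 y := by
  simpa only [l2_eq_norm_s19, WithLp.toLp_sub] using norm_sub_le _ _

lemma l2_le_l2_add_add_l2_ite {u : ι → ℝ} (p : ι → Prop) [DecidablePred p]
    (hu : ∀ i, u i ≠ 0 → p i) (δ : ι → ℝ) :
    l2 u ≤ l2 (u + δ) + l2 (fun i => if p i then δ i else 0) := by
  set w : ι → ℝ := fun i => if p i then (u + δ) i else 0
  have hu : u = w - fun i => if p i then δ i else 0 := by
    ext i
    by_cases hi : p i
    · simp [w, hi]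
    · simpa [w, hi] using not_imp_comm.mp (hu i) hi
  have hw : l2 w ≤ l2 (u + δ) := l2_le_l2_of_abs_le fun i => by simp only [w]; split_ifs <;> simp
  calc l2 u ≤ l2 w + l2 (fun i => if p i then δ i else 0) := hu ▸ l2_sub_le _ _
    _ ≤ _ := by gcongr

lemma l2_sum_le {β : Type*} (s : Finset β) (f : β → ι → ℝ) :
    l2 (∑ j ∈ s, f j) ≤ ∑ j ∈ s, l2 (f j) := by
  simp only [l2_eq_norm_s19, WithLp.toLp_sum]
  exact norm_sum_le _ _

lemma l1_nonneg (x : ι → ℝ) : 0 ≤ l1 x := sum_nonneg fun _ _ => abs_nonneg _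

lemma l1_pos {x : ι → ℝ} (hx : x ≠ 0) : 0 < l1 x := by
  obtain ⟨i, hi⟩ := Function.ne_iff.mp hx
  exact sum_pos' (fun _ _ => abs_nonneg _) ⟨i, mem_univ _, abs_pos.mpr hi⟩

lemma l1_subtype (p : ι → Prop) [DecidablePred p] (x : ι → ℝ) :
    l1 (fun i : {i // p i} => x i) = l1 (fun i => if p i then x i else 0) := by
  unfold l1
  rw [sum_subtype_eq_sum_ite p fun i => |x i|]
  simp [apply_ite]

lemma l1_le_sqrt_card_mul_l2 (x : ι → ℝ) : l1 x ≤ √(Fintype.card ι) * l2 x := by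
  simpa [l1, l2, Real.sqrt_sq_eq_abs] using
    Real.sum_sqrt_mul_sqrt_le univ (f := fun _ => 1) (g := fun i => x i ^ 2)
      (fun _ => zero_le_one) (fun i => sq_nonneg (x i))

lemma l1_neg_add_le (x y : ι → ℝ) : l1 (-(x + y)) ≤ l1 x + l1 y := by
  simp only [l1, ← sum_add_distrib, Pi.neg_apply, Pi.add_apply, abs_neg]
  exact sum_le_sum fun i _ => abs_add_le _ _

lemma l1_add_l1_le {ι : Type*} [Fintype ι] {a : ι → ℝ} (p : ι → Prop) [DecidablePred p]
    (ha : ∀ i, a i ≠ 0 → p i) (δ : ι → ℝ) :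
    l1 a + l1 δ ≤ l1 (a + δ) + 2 * l1 (fun i : {i // p i} => δ i) := by
  rw [l1_subtype]
  simp only [l1, mul_sum, ← sum_add_distrib]
  refine sum_le_sum fun i _ => ?_
  by_cases hi : p i
  · simp only [hi, if_true, Pi.add_apply]
    have h := abs_add_le (a i + δ i) (-δ i)
    rw [add_neg_cancel_right, abs_neg] at h
    linarith
  · simp [hi, not_imp_comm.mp (ha i) hi]

end Norms

section OperatorBounds

variable {α β : Type*} [Fintype α] [Fintype β]

lemma le_sSup_setOf_exists_eq {κ : Type*} [Finite κ] (f : κ → ℝ) (j : κ) :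
    f j ≤ sSup {x | ∃ j, x = f j} :=
  le_csSup ((Set.finite_range f).bddAbove.mono (by rintro _ ⟨j, rfl⟩; exact ⟨j, rfl⟩)) ⟨j, rfl⟩

lemma l1_mulVec_le (W : Matrix α β ℝ) (v : β → ℝ) : l1 (W *ᵥ v) ≤ norm11 W * l1 v := by
  calc l1 (W *ᵥ v) ≤ ∑ i, ∑ j, |W i j| * |v j| := by
        refine sum_le_sum fun i _ => ?_
        simp only [mulVec, dotProduct, ← abs_mul]
        exact abs_sum_le_sum_abs _ _
    _ = ∑ j, (∑ i, |W i j|) * |v j| := by rw [sum_comm]; simp only [sum_mul]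
    _ ≤ ∑ j, norm11 W * |v j| := by
        gcongr with j
        exact le_sSup_setOf_exists_eq (fun j => ∑ i, |W i j|) j
    _ = norm11 W * l1 v := (mul_sum ..).symm

lemma l1_le_norm11_mul_add_norm11_mul {γ : Type*} [Fintype γ] {X : Matrix α β ℝ}
    {Y : Matrix α γ ℝ} {u : α → ℝ} {v : β → ℝ} {w : γ → ℝ} (h : u = -(X *ᵥ v + Y *ᵥ w)) :
    l1 u ≤ norm11 X * l1 v + norm11 Y * l1 w :=
  h ▸ (l1_neg_add_le _ _).trans (add_le_add (l1_mulVec_le X v) (l1_mulVec_le Y w))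

open scoped Matrix.Norms.L2Operator in
lemma spec_bddAbove (Z : Matrix α β ℝ) :
    BddAbove {x | ∃ v : β → ℝ, l2 v = 1 ∧ x = l2 (Z *ᵥ v)} := by
  classical
  refine ⟨‖Z‖, ?_⟩
  rintro _ ⟨v, hv, rfl⟩
  rw [l2_eq_norm_s19] at hv
  simpa [l2_eq_norm_s19, hv] using Z.l2_opNorm_mulVec (WithLp.toLp 2 v)

lemma l2_mulVec_le (Z : Matrix α β ℝ) (v : β → ℝ) : l2 (Z *ᵥ v) ≤ spec Z * l2 v := by
  rcases (l2_nonneg v).eq_or_lt with hv | hv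
  · obtain rfl : v = 0 := by simpa [l2_eq_norm_s19] using hv.symm
    simp [l2_eq_norm_s19]
  · set u := (l2 v)⁻¹ • v
    have hu : l2 u = 1 := by
      rw [l2_smul, abs_of_pos (inv_pos.mpr hv), inv_mul_cancel₀ hv.ne']
    have hvu : v = l2 v • u := by simp [u, smul_smul, mul_inv_cancel₀ hv.ne']
    calc l2 (Z *ᵥ v) = l2 v * l2 (Z *ᵥ u) := by
          conv_lhs => rw [hvu]
          rw [mulVec_smul, l2_smul, abs_of_pos hv]
      _ ≤ l2 v * spec Z := by gcongr; exact le_csSup (spec_bddAbove Z) ⟨u, hu, rfl⟩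
      _ = spec Z * l2 v := mul_comm _ _

lemma sum_l2_mulVec_le_rhoc_mul {κ₁ κ₂ : Type*} [Fintype κ₁] [Fintype κ₂] [DecidableEq κ₁]
    [DecidableEq κ₂] (Z : Matrix α β ℝ) (pr : α → κ₁)
    (pc : β → κ₂) (v : β → ℝ) :
    ∑ E, l2 (fun i : {i // pr i = E} => (Z *ᵥ v) i) ≤
      rhoc Z pr pc * ∑ F, l2 (fun j : {j // pc j = F} => v j) := by
  set Zb := fun E F => Z.submatrix (Subtype.val : {i // pr i = E} → α)
    (Subtype.val : {j // pc j = F} → β)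
  have hblock : ∀ E, (fun i : {i // pr i = E} => (Z *ᵥ v) i) =
      ∑ F, Zb E F *ᵥ fun j => v j := by
    intro E
    ext i
    simp only [Zb, Finset.sum_apply, mulVec, dotProduct, submatrix_apply]
    exact (Fintype.sum_fiberwise pc _).symm
  calc ∑ E, l2 (fun i : {i // pr i = E} => (Z *ᵥ v) i)
      ≤ ∑ E, ∑ F, spec (Zb E F) * l2 (fun j : {j // pc j = F} => v j) := by
        refine sum_le_sum fun E _ => ?_
        rw [hblock]
        exact (l2_sum_le _ _).trans (sum_le_sum fun F _ => l2_mulVec_le _ _)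
    _ = ∑ F, (∑ E, spec (Zb E F)) * l2 (fun j : {j // pc j = F} => v j) := by
        rw [sum_comm]
        simp only [sum_mul]
    _ ≤ ∑ F, rhoc Z pr pc * l2 (fun j : {j // pc j = F} => v j) := by
        gcongr with F
        · exact l2_nonneg _
        · exact le_sSup_setOf_exists_eq (fun F => ∑ E, spec (Zb E F)) F
    _ = _ := (mul_sum ..).symm

end OperatorBounds

namespace Matrix

variable {R : Type*} [CommRing R] {m n p r : Type*} [Fintype m] [Fintype n] [Fintype p]
  [Fintype r] [DecidableEq n]

lemma inv_mul_mul_eq_one_of_isUnit {N : Matrix n m R} {X : Matrix m n R}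
    (h : IsUnit (N * X)) : (N * X)⁻¹ * N * X = 1 := by
  rw [Matrix.mul_assoc, nonsing_inv_mul _ ((isUnit_iff_isUnit_det _).mp h)]

lemma eq_neg_of_mulVec_add_add_eq_zero {L : Matrix n m R} {X : Matrix m n R} {Y : Matrix m p R}
    {Z : Matrix m r R} (hLX : L * X = 1) {u : n → R} {v : p → R} {w : r → R}
    (h : X *ᵥ u + Y *ᵥ v + Z *ᵥ w = 0) : u = -((L * Y) *ᵥ v + (L * Z) *ᵥ w) := by
  have := congrArg (L *ᵥ ·) h
  simp only [mulVec_add, mulVec_mulVec, hLX, one_mulVec, mulVec_zero, add_assoc] at this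
  exact eq_neg_of_add_eq_zero_left this

end Matrix

namespace HiLasso

variable {q g : ℕ}

lemma sum_eq_add_add {M : Type*} [AddCommMonoid M] (k s : ℕ) (f : Fin q × Fin g → M) :
    ∑ x, f x = ∑ x : {x : Fin q × Fin g // (x.1 : ℕ) < k ∧ (x.2 : ℕ) < s}, f x +
      ∑ x : {x : Fin q × Fin g // (x.1 : ℕ) < k ∧ s ≤ (x.2 : ℕ)}, f x +
      ∑ x : {x : Fin q × Fin g // k ≤ (x.1 : ℕ)}, f x := by
  simp only [sum_subtype_eq_sum_ite _ f, ← sum_add_distrib]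
  refine sum_congr rfl fun x _ => ?_
  split_ifs <;> first | omega | simp

lemma mulVec_eq_add_add {ι : Type*} (k s : ℕ) (D : Matrix ι (Fin q × Fin g) ℝ)
    (v : Fin q × Fin g → ℝ) :
    D *ᵥ v = (of fun i (x : {x : Fin q × Fin g // (x.1 : ℕ) < k ∧ (x.2 : ℕ) < s}) => D i x) *ᵥ
        (fun x => v x) +
      (of fun i (x : {x : Fin q × Fin g // (x.1 : ℕ) < k ∧ s ≤ (x.2 : ℕ)}) => D i x) *ᵥ
        (fun x => v x) +
      (of fun i (x : {x : Fin q × Fin g // k ≤ (x.1 : ℕ)}) => D i x) *ᵥ (fun x => v x) := by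
  ext i
  exact sum_eq_add_add k s fun x => D i x * v x

lemma l1_eq_add_add (k s : ℕ) (x : Fin q × Fin g → ℝ) :
    l1 x = l1 (fun y : {y : Fin q × Fin g // (y.1 : ℕ) < k ∧ (y.2 : ℕ) < s} => x y) +
      l1 (fun y : {y : Fin q × Fin g // (y.1 : ℕ) < k ∧ s ≤ (y.2 : ℕ)} => x y) +
      l1 (fun y : {y : Fin q × Fin g // k ≤ (y.1 : ℕ)} => x y) :=
  sum_eq_add_add k s fun y => |x y|

lemma sum_l2_fiber_eq_psiG (r : Fin q × Fin g → Prop) [DecidablePred r]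
    (x : Fin q × Fin g → ℝ) :
    ∑ E, l2 (fun y : {y : {y // r y} // y.val.1 = E} => x y) =
      psiG (fun y => if r y then x y else 0) := by
  refine sum_congr rfl fun E _ => ?_
  rw [l2_subtype (fun y : {y // r y} => y.val.1 = E) (fun y => x y),
    l2_subtype r fun y => if y.1 = E then x y else 0,
    ← l2_ite_fst E fun y => if r y then x y else 0]
  congr 1
  ext y
  by_cases hy : y.1 = E <;> simp [hy]

lemma psiG_le_rhoc_mul_psiG (r r' : Fin q × Fin g → Prop) [DecidablePred r] [DecidablePred r']
    (Z : Matrix {x // r x} {x // r' x} ℝ) {x : Fin q × Fin g → ℝ}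
    (h : (fun y : {y // r y} => x y) = -(Z *ᵥ fun y => x y)) :
    psiG (fun y => if r y then x y else 0) ≤
      rhoc Z (fun y => y.val.1) (fun y => y.val.1) * psiG (fun y => if r' y then x y else 0) := by
  rw [← sum_l2_fiber_eq_psiG, ← sum_l2_fiber_eq_psiG]
  convert sum_l2_mulVec_le_rhoc_mul Z (fun y => y.val.1) (fun y => y.val.1) (fun y => x y)
    using 2 with E
  have hZ : (Z *ᵥ fun y => x y) = -fun y : {y // r y} => x y := by rw [h, neg_neg]
  rw [← l2_neg]
  congr 1
  ext y
  simp [hZ]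

lemma l1_le_sqrt_mul_psiG (x : Fin q × Fin g → ℝ) : l1 x ≤ √g * psiG x := by
  rw [l1, Fintype.sum_prod_type, psiG, mul_sum]
  gcongr with E
  simpa [l1] using l1_le_sqrt_card_mul_l2 fun b => x (E, b)

lemma psiG_nonneg (x : Fin q × Fin g → ℝ) : 0 ≤ psiG x := sum_nonneg fun _ _ => l2_nonneg _

lemma psiG_add_le_add {k s : ℕ} {a : Fin q × Fin g → ℝ}
    (ha : ∀ x, a x ≠ 0 → (x.1 : ℕ) < k ∧ (x.2 : ℕ) < s) (δ : Fin q × Fin g → ℝ) :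
    psiG a + psiG (fun x => if k ≤ (x.1 : ℕ) then δ x else 0) ≤
      psiG (a + δ) + psiG (fun x => if (x.1 : ℕ) < k ∧ (x.2 : ℕ) < s then δ x else 0) := by
  simp only [psiG, ← sum_add_distrib]
  refine sum_le_sum fun E _ => ?_
  by_cases hE : k ≤ (E : ℕ)
  · have ha0 : ∀ b, a (E, b) = 0 := fun b => by
      by_contra h
      exact absurd (ha _ h).1 (not_lt.mpr hE)
    simp [hE, ha0, not_lt.mpr hE, l2]
  · have hl2 := l2_le_l2_add_add_l2_ite (fun b : Fin g => (b : ℕ) < s)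
      (fun b h => (ha (E, b) h).2) fun b => δ (E, b)
    have hEk : (E : ℕ) < k := not_le.mp hE
    simpa [hE, hEk, l2] using hl2

lemma objective_increment_pos {lam α γ ρ θ η t ℓS ℓT ℓG ψS ψG : ℝ} (hlam : 0 < lam ∧ lam < 1)
    (hα : α ≤ 1) (hρ : ρ < α) (hγ : γ ≤ 1 + lam * (1 - α) / (t * (1 - lam))) (hθ : θ < 1)
    (hη : η ≤ γ) (hℓT : 0 ≤ ℓT) (hℓG : 0 ≤ ℓG) (hψS : 0 ≤ ψS) (hψG : 0 ≤ ψG)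
    (hℓ : 0 < ℓS + ℓT + ℓG) (hψS_le : ψS ≤ ρ * ψG) (hℓS_le : ℓS ≤ θ * ℓT + η * ℓG)
    (hℓG_le : ℓG ≤ t * ψG) :
    0 < lam * (ψG - ψS) + (1 - lam) * (ℓT + ℓG - ℓS) := by
  obtain ⟨hlam0, hlam1⟩ := hlam
  rcases hψG.eq_or_lt with rfl | hψG_pos
  · obtain rfl : ℓG = 0 := le_antisymm (by simpa using hℓG_le) hℓG
    obtain rfl : ψS = 0 := le_antisymm (by simpa using hψS_le) hψS
    -- `δ = δ_T`: only the strict bound `θ < 1` gives an increase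
    have hℓT_pos : 0 < ℓT := by
      by_contra! hℓT_pos
      obtain rfl : ℓT = 0 := le_antisymm hℓT_pos hℓT
      linarith
    nlinarith [mul_pos (sub_pos.mpr hlam1) (mul_pos (sub_pos.mpr hθ) hℓT_pos)]
  · have hgain : lam * (1 - α) * ψG < lam * (ψG - ψS) := by
      have : ψS < α * ψG := hψS_le.trans_lt (mul_lt_mul_of_pos_right hρ hψG_pos)
      nlinarith
    have hloss : -(lam * (1 - α) * ψG) ≤ (1 - lam) * (ℓT + ℓG - ℓS) := by
      have hℓ_le : (1 - lam) * ((1 - γ) * ℓG) ≤ (1 - lam) * (ℓT + ℓG - ℓS) :=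
        mul_le_mul_of_nonneg_left (by nlinarith) (sub_nonneg.mpr hlam1.le)
      rcases le_or_gt γ 1 with hγ1 | hγ1
      · nlinarith [mul_nonneg (mul_nonneg hlam0.le (sub_nonneg.mpr hα)) hψG_pos.le,
          mul_nonneg (sub_nonneg.mpr hlam1.le) (mul_nonneg (sub_nonneg.mpr hγ1) hℓG)]
      · have hden : 0 < t * (1 - lam) := by
          by_contra! h
          linarith [div_nonpos_of_nonneg_of_nonpos
            (mul_nonneg hlam0.le (sub_nonneg.mpr hα)) h]
        have hγt : (γ - 1) * (t * (1 - lam)) ≤ lam * (1 - α) :=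
          (le_div_iff₀ hden).mp (by linarith)
        nlinarith [mul_le_mul_of_nonneg_left hℓG_le
            (mul_nonneg (sub_nonneg.mpr hγ1.le) (sub_nonneg.mpr hlam1.le)),
          mul_le_mul_of_nonneg_right hγt hψG_pos.le]
    linarith

end HiLasso

open HiLasso

theorem hilasso_recovery_general {m q g k s : ℕ}
    (D : Matrix (Fin m) (Fin q × Fin g) ℝ)
    (a : Fin q × Fin g → ℝ) (lam α γ : ℝ)
    (hlam : 0 < lam ∧ lam < 1)
    -- support structure of `a`: block `k`-sparse, `s`-sparse blocks, active set the
    -- first `s` entries of each of the first `k` groups, with exactly `s` nonzeros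
    (hsupp : ∀ x : Fin q × Fin g, a x ≠ 0 → ((x.1 : ℕ) < k ∧ (x.2 : ℕ) < s))
    -- submatrices of `D`: active entries `S₀`, inactive entries of active groups `T₀`,
    -- inactive groups `Ḡ₀`
    (DS : Matrix (Fin m) {x : Fin q × Fin g // (x.1 : ℕ) < k ∧ (x.2 : ℕ) < s} ℝ)
    (hDS : DS = Matrix.of fun i x => D i x.val)
    (DT : Matrix (Fin m) {x : Fin q × Fin g // (x.1 : ℕ) < k ∧ s ≤ (x.2 : ℕ)} ℝ)
    (hDT : DT = Matrix.of fun i x => D i x.val)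
    (DGc : Matrix (Fin m) {x : Fin q × Fin g // k ≤ (x.1 : ℕ)} ℝ)
    (hDGc : DGc = Matrix.of fun i x => D i x.val)
    -- `P` is the orthogonal projector onto the range of `D_{T₀}`
    (P : Matrix (Fin m) (Fin m) ℝ)
    (hPT : P * DT = DT)
    -- Moore–Penrose pseudo-inverse `H` and oblique pseudo-inverse `Q`
    (hHinv : IsUnit (DS.transpose * DS))
    (H : Matrix {x : Fin q × Fin g // (x.1 : ℕ) < k ∧ (x.2 : ℕ) < s} (Fin m) ℝ)
    (hH : H = (DS.transpose * DS)⁻¹ * DS.transpose)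
    (hQinv : IsUnit (DS.transpose * (1 - P) * DS))
    (Q : Matrix {x : Fin q × Fin g // (x.1 : ℕ) < k ∧ (x.2 : ℕ) < s} (Fin m) ℝ)
    (hQ : Q = (DS.transpose * (1 - P) * DS)⁻¹ * (DS.transpose * (1 - P)))
    -- conditions (i)–(iii)
    (hα : α ≤ 1)
    (hcond1 : rhoc (Q * DGc) (fun x => x.val.1) (fun x => x.val.1) < α)
    (hγ : γ ≤ 1 + lam * (1 - α) / (Real.sqrt (g : ℝ) * (1 - lam)))
    (hcond2 : norm11 (H * DGc) < γ)
    (hcond3 : norm11 (H * DT) < 1) :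
    ∀ a' : Fin q × Fin g → ℝ, a' ≠ a → D.mulVec a' = D.mulVec a →
      lam * psiG a + (1 - lam) * l1 a < lam * psiG a' + (1 - lam) * l1 a' := by
  intro a' hne heq
  obtain ⟨δ, rfl⟩ : ∃ δ, a' = a + δ := ⟨a' - a, by abel⟩
  have hDδ : D *ᵥ δ = 0 := by rwa [mulVec_add, add_eq_left] at heq
  rw [mulVec_eq_add_add k s, ← hDS, ← hDT, ← hDGc] at hDδ
  have hQT : Q * DT = 0 := by
    have h1P : (1 - P) * DT = 0 := by rw [Matrix.sub_mul, Matrix.one_mul, hPT, sub_self]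
    simp only [hQ, Matrix.mul_assoc, h1P, Matrix.mul_zero]
  have hQS : Q * DS = 1 := hQ ▸ inv_mul_mul_eq_one_of_isUnit hQinv
  have hHS : H * DS = 1 := hH ▸ inv_mul_mul_eq_one_of_isUnit hHinv
  have hδQ := eq_neg_of_mulVec_add_add_eq_zero hQS hDδ
  rw [hQT, zero_mulVec, zero_add] at hδQ
  have hδH := eq_neg_of_mulVec_add_add_eq_zero hHS hDδ
  have hσ := psiG_le_rhoc_mul_psiG _ _ (Q * DGc) hδQ
  have hA := l1_le_norm11_mul_add_norm11_mul hδH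
  have hC := l1_subtype (fun x : Fin q × Fin g => k ≤ (x.1 : ℕ)) δ ▸ l1_le_sqrt_mul_psiG _
  have hψ := psiG_add_le_add hsupp δ
  have hl1 := l1_add_l1_le _ hsupp δ
  have hδ : 0 < l1 δ := l1_pos fun h => hne (by rw [h, add_zero])
  rw [l1_eq_add_add k s δ] at hl1 hδ
  have hgap := objective_increment_pos hlam hα hcond1 hγ hcond3 hcond2.le (l1_nonneg _)
    (l1_nonneg _) (psiG_nonneg _) (psiG_nonneg _) hδ hσ hA hC
  linarith [mul_le_mul_of_nonneg_left hψ hlam.1.le,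
    mul_le_mul_of_nonneg_left hl1 (sub_nonneg.mpr hlam.2.le)]

/-- Theorem 1 (HiLasso recovery).  The dictionary `D` has `q` groups of `g` columns;
the active groups are the first `k` and within each active group the active entries are
the first `s`.  Under conditions (i)–(iii) on the oblique pseudo-inverse `Q` and the
Moore–Penrose pseudo-inverse `H`, the true code `a` is the unique minimizer of the
noiseless HiLasso program. -/
theorem hilasso_recovery {m q g k s : ℕ}
    (D : Matrix (Fin m) (Fin q × Fin g) ℝ)
    (a : Fin q × Fin g → ℝ) (lam α γ : ℝ)
    (hlam : 0 < lam ∧ lam < 1)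
    -- support structure of `a`: block `k`-sparse, `s`-sparse blocks, active set the
    -- first `s` entries of each of the first `k` groups, with exactly `s` nonzeros
    (hsupp : ∀ x : Fin q × Fin g, a x ≠ 0 → ((x.1 : ℕ) < k ∧ (x.2 : ℕ) < s))
    (hexact : ∀ G : Fin q, (G : ℕ) < k → Nat.card {b : Fin g // a (G, b) ≠ 0} = s)
    -- the columns of the active groups are linearly independent
    (hindep : LinearIndependent ℝ
      (fun j : {x : Fin q × Fin g // (x.1 : ℕ) < k} => fun i : Fin m => D i j.val))
    -- submatrices of `D`: active entries `S₀`, inactive entries of active groups `T₀`,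
    -- inactive groups `Ḡ₀`
    (DS : Matrix (Fin m) {x : Fin q × Fin g // (x.1 : ℕ) < k ∧ (x.2 : ℕ) < s} ℝ)
    (hDS : DS = Matrix.of fun i x => D i x.val)
    (DT : Matrix (Fin m) {x : Fin q × Fin g // (x.1 : ℕ) < k ∧ s ≤ (x.2 : ℕ)} ℝ)
    (hDT : DT = Matrix.of fun i x => D i x.val)
    (DGc : Matrix (Fin m) {x : Fin q × Fin g // k ≤ (x.1 : ℕ)} ℝ)
    (hDGc : DGc = Matrix.of fun i x => D i x.val)
    -- `P` is the orthogonal projector onto the range of `D_{T₀}`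
    (P : Matrix (Fin m) (Fin m) ℝ)
    (hPsymm : P.transpose = P) (hPidem : P * P = P) (hPT : P * DT = DT)
    (hPrange : ∀ i : Fin m, (fun r => P r i) ∈
      Submodule.span ℝ (Set.range fun j : {x : Fin q × Fin g // (x.1 : ℕ) < k ∧ s ≤ (x.2 : ℕ)} =>
        fun r : Fin m => DT r j))
    -- Moore–Penrose pseudo-inverse `H` and oblique pseudo-inverse `Q`
    (hHinv : IsUnit (DS.transpose * DS))
    (H : Matrix {x : Fin q × Fin g // (x.1 : ℕ) < k ∧ (x.2 : ℕ) < s} (Fin m) ℝ)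
    (hH : H = (DS.transpose * DS)⁻¹ * DS.transpose)
    (hQinv : IsUnit (DS.transpose * (1 - P) * DS))
    (Q : Matrix {x : Fin q × Fin g // (x.1 : ℕ) < k ∧ (x.2 : ℕ) < s} (Fin m) ℝ)
    (hQ : Q = (DS.transpose * (1 - P) * DS)⁻¹ * (DS.transpose * (1 - P)))
    -- conditions (i)–(iii)
    (hα : α ≤ 1)
    (hcond1 : rhoc (Q * DGc) (fun x => x.val.1) (fun x => x.val.1) < α)
    (hγ : γ ≤ 1 + lam * (1 - α) / (Real.sqrt (g : ℝ) * (1 - lam)))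
    (hcond2 : norm11 (H * DGc) < γ)
    (hcond3 : norm11 (H * DT) < 1) :
    ∀ a' : Fin q × Fin g → ℝ, a' ≠ a → D.mulVec a' = D.mulVec a →
      lam * psiG a + (1 - lam) * l1 a < lam * psiG a' + (1 - lam) * l1 a' :=
  hilasso_recovery_general D a lam α γ hlam hsupp DS hDS DT hDT DGc hDGc P hPT hHinv H hH hQinv Q hQ
    hα hcond1 hγ hcond2 hcond3
end
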